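/- arXiv:2010.11207 — 4 statements merged into one kernel-verified Lean document; each statement's English description precedes it below -/
import Mathlib

section
/- There exists a constant C ≥ 1 depending only on m, c, C₀ such that every function π : I → ℝ with π_x ≥ 0 for all x ∈ I and satisfying Σ_{x∈I} π_x·(ℒφ)_x = 0 for every function φ : I → ℝ obeys sup_{x∈I} π_x ≤ C·inf_{x∈I} π_x. Moreover, there exists such an invariant function π with π_x ≥ 0, Σ_{x∈I} π_x = N+1, and C^{−1} ≤ π_x ≤ C for all x ∈ I. -/
/-!
Testing invariance against the indicator of a site `y` balances the mass flowing into `y`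
against the mass leaving it. Nearest-neighbour rates are at least `N²c/2` and the exit rate is at
most `N²C₀`, so `π` changes by at most the factor `κ = 2C₀/c + 1` between neighbours; this only
compares points at bounded distance. Testing against the ramp `(z - t)₊` with `t` in the window
`[2m - 1, N - 2m + 1]` gives more: `ℒ` maps the ramp to a tent of width `m` around `t` in the
bulk, to `0` near the left end and to a fixed negative profile near the right end. Hence the
`π`-average of the tent around `t` equals a boundary flux that does not depend on `t`, and by the
local comparison this flux is bounded above and below by multiples of `π t`. Every site is within
`2m` of the window, unless `N < 4m - 2`, where the local comparison suffices.

An invariant `π ≥ 0` exists because the rate matrix has vanishing row sums (so a left null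
vector) and nonnegative off-diagonal entries (so the absolute value of a left null vector is one).
-/

open scoped BigOperators

/-- Long-range Neumann generator `ℒ` acting on `ℤ`-indexed functions; for `x` in the
bulk `m ≤ x ≤ N − m` it is the long-range Laplacian, and near the two boundaries the
jumps are clamped to stay inside `I = {0,…,N}`. -/
noncomputable def Lact (N m : ℕ) (α : ℕ → ℝ) (φ : ℤ → ℝ) (x : ℤ) : ℝ :=
  if (m : ℤ) ≤ x ∧ x ≤ (N : ℤ) - (m : ℤ) then
    ((N : ℝ) ^ 2 / 2) * ∑ k ∈ Finset.Icc 1 m, α k * (φ (x + k) + φ (x - k) - 2 * φ x)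
  else if 0 ≤ x ∧ x ≤ (m : ℤ) - 1 then
    ((N : ℝ) ^ 2 / 2) * ∑ k ∈ Finset.Icc 1 m,
      α k * ((φ (x + k) - φ x) + (φ (x - min (k : ℤ) x) - φ x))
  else
    ((N : ℝ) ^ 2 / 2) * ∑ k ∈ Finset.Icc 1 m,
      α k * ((φ (x - k) - φ x) + (φ (x + min (k : ℤ) ((N : ℤ) - x)) - φ x))

open Finset
open scoped Matrix

theorem Matrix.exists_nonneg_ne_zero_vecMul_eq_zero {n : Type*} [Fintype n] [DecidableEq n]
    [Nonempty n] (Q : Matrix n n ℝ) (hoff : ∀ i j, i ≠ j → 0 ≤ Q i j)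
    (hrow : ∀ i, ∑ j, Q i j = 0) : ∃ μ : n → ℝ, 0 ≤ μ ∧ μ ≠ 0 ∧ μ ᵥ* Q = 0 := by
  obtain ⟨τ, hτ, hτQ⟩ : ∃ τ : n → ℝ, τ ≠ 0 ∧ τ ᵥ* Q = 0 := by
    rw [Matrix.exists_vecMul_eq_zero_iff, ← Matrix.exists_mulVec_eq_zero_iff]
    exact ⟨1, one_ne_zero, funext fun i => by simpa [Matrix.mulVec, dotProduct] using hrow i⟩
  have hsplit : ∀ (v : n → ℝ) j, (v ᵥ* Q) j = v j * Q j j + ∑ i ∈ univ.erase j, v i * Q i j :=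
    fun v j => (add_sum_erase _ (fun i => v i * Q i j) (mem_univ j)).symm
  -- replacing `τ` by `|τ|` can only increase each column sum, and the total of these is `0`
  have hcol : ∀ j, 0 ≤ (|τ| ᵥ* Q) j := by
    intro j
    have hτj : ∑ i ∈ univ.erase j, τ i * Q i j = -(τ j * Q j j) := by
      have := congrFun hτQ j
      rw [hsplit, Pi.zero_apply] at this
      linarith
    calc 0 ≤ |τ j| * Q j j + |τ j * Q j j| := by
          rw [abs_mul]; nlinarith [neg_abs_le (Q j j), abs_nonneg (τ j)]
      _ = |τ j| * Q j j + |∑ i ∈ univ.erase j, τ i * Q i j| := by rw [hτj, abs_neg]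
      _ ≤ |τ j| * Q j j + ∑ i ∈ univ.erase j, |τ i| * Q i j := by
          gcongr
          refine (abs_sum_le_sum_abs _ _).trans_eq (sum_congr rfl fun i hi => ?_)
          rw [abs_mul, abs_of_nonneg (hoff i j (ne_of_mem_erase hi))]
      _ = (|τ| ᵥ* Q) j := (hsplit |τ| j).symm
  have htotal : ∑ j, (|τ| ᵥ* Q) j = 0 := by
    simp only [Matrix.vecMul, dotProduct]
    rw [sum_comm]
    simp [← mul_sum, hrow]
  refine ⟨|τ|, fun i => abs_nonneg (τ i), fun h => hτ (funext fun i => by simpa using congrFun h i),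
    funext fun j => ?_⟩
  exact (sum_eq_zero_iff_of_nonneg fun j _ => hcol j).mp htotal j (mem_univ j)

theorem Finset.exists_nonneg_stationary_of_sum_eq_zero {ι : Type*} [DecidableEq ι] {s : Finset ι}
    (hs : s.Nonempty) {Q : ι → ι → ℝ} (hoff : ∀ x ∈ s, ∀ y ∈ s, x ≠ y → 0 ≤ Q x y)
    (hrow : ∀ x ∈ s, ∑ y ∈ s, Q x y = 0) :
    ∃ μ : ι → ℝ, (∀ x ∈ s, 0 ≤ μ x) ∧ 0 < ∑ x ∈ s, μ x ∧
      ∀ y ∈ s, ∑ x ∈ s, μ x * Q x y = 0 := by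
  have : Nonempty s := hs.coe_sort
  obtain ⟨μ, hμ, hμ0, hμQ⟩ := Matrix.exists_nonneg_ne_zero_vecMul_eq_zero
    (fun i j : s => Q i j) (fun i j hij => hoff i i.2 j j.2 (Subtype.coe_ne_coe.mpr hij))
    (fun i => by rw [sum_coe_sort s (Q i)]; exact hrow i i.2)
  set μ' : ι → ℝ := fun x => if h : x ∈ s then μ ⟨x, h⟩ else 0
  have hsum : ∀ g : ι → ℝ, ∑ x ∈ s, μ' x * g x = ∑ i : s, μ i * g i := fun g => by
    rw [← sum_coe_sort s]
    exact sum_congr rfl fun i _ => by simp [μ']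
  refine ⟨μ', fun x hx => by simpa [μ', hx] using hμ ⟨x, hx⟩, ?_, fun y hy => ?_⟩
  · obtain ⟨i, hi⟩ := Function.ne_iff.mp hμ0
    have hmass := hsum fun _ => 1
    simp only [mul_one] at hmass
    exact hmass ▸ sum_pos' (fun j _ => hμ j) ⟨i, mem_univ i, (hμ i).lt_of_ne' hi⟩
  · simpa [Matrix.vecMul, dotProduct] using (hsum (Q · y)).trans (congrFun hμQ ⟨y, hy⟩)

theorem Finset.mul_le_mul_neg_of_sum_mul_eq_zero {ι : Type*} [DecidableEq ι] {s : Finset ι}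
    {π : ι → ℝ} {Q : ι → ι → ℝ} {y z : ι} (hπ : ∀ x ∈ s, 0 ≤ π x)
    (hoff : ∀ x ∈ s, x ≠ y → 0 ≤ Q x y) (hbal : ∑ x ∈ s, π x * Q x y = 0) (hy : y ∈ s)
    (hz : z ∈ s) (hzy : z ≠ y) : π z * Q z y ≤ π y * -Q y y := by
  have hz' : z ∈ s.erase y := mem_erase.mpr ⟨hzy, hz⟩
  have := single_le_sum (f := fun x => π x * Q x y)
    (fun x hx => mul_nonneg (hπ x (mem_of_mem_erase hx)) (hoff x (mem_of_mem_erase hx)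
      (ne_of_mem_erase hx))) hz'
  linarith [add_sum_erase s (fun x => π x * Q x y) hy]

theorem le_pow_mul_of_forall_abs_sub_eq_one {a b : ℤ} {f : ℤ → ℝ} {κ : ℝ} (hκ : 1 ≤ κ)
    (hf : ∀ x ∈ Icc a b, 0 ≤ f x)
    (hstep : ∀ x ∈ Icc a b, ∀ y ∈ Icc a b, |x - y| = 1 → f x ≤ κ * f y) (d : ℕ) :
    ∀ x ∈ Icc a b, ∀ y ∈ Icc a b, |x - y| ≤ d → f x ≤ κ ^ d * f y := by
  induction d with
  | zero =>
    intro x _ y _ hxy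
    rw [Nat.cast_zero, abs_nonpos_iff, sub_eq_zero] at hxy
    simp [hxy]
  | succ d ih =>
    intro x hx y hy hxy
    obtain rfl | hne := eq_or_ne x y
    · nlinarith [one_le_pow₀ (n := d + 1) hκ, hf x hx]
    obtain ⟨y', hy', hd, hadj⟩ : ∃ y' ∈ Icc a b, |x - y'| ≤ d ∧ |y' - y| = 1 := by
      simp only [mem_Icc, abs_le, Nat.cast_add, Nat.cast_one] at hx hy hxy ⊢
      rcases hne.lt_or_gt with h | h
      · exact ⟨y - 1, by omega, by omega, by norm_num⟩
      · exact ⟨y + 1, by omega, by omega, by norm_num⟩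
    calc f x ≤ κ ^ d * f y' := ih x hx y' hy' hd
      _ ≤ κ ^ d * (κ * f y) := by
          gcongr
          exact hstep y' hy' y hy hadj
      _ = κ ^ (d + 1) * f y := by ring

def IsLactInvariant (N m : ℕ) (α : ℕ → ℝ) (π : ℤ → ℝ) : Prop :=
  ∀ φ : ℤ → ℝ, ∑ x ∈ Icc (0 : ℤ) N, π x * Lact N m α φ x = 0

section Generator

variable {N m : ℕ} {α : ℕ → ℝ} {c C₀ : ℝ} {x y : ℤ}

def jumpFst (N m : ℕ) (x : ℤ) (k : ℕ) : ℤ :=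
  if (m : ℤ) ≤ x ∧ x ≤ (N : ℤ) - m then x + k
  else if 0 ≤ x ∧ x ≤ (m : ℤ) - 1 then x + k
  else x - k

def jumpSnd (N m : ℕ) (x : ℤ) (k : ℕ) : ℤ :=
  if (m : ℤ) ≤ x ∧ x ≤ (N : ℤ) - m then x - k
  else if 0 ≤ x ∧ x ≤ (m : ℤ) - 1 then x - min (k : ℤ) x
  else x + min (k : ℤ) ((N : ℤ) - x)

theorem Lact_eq_sum_jump (φ : ℤ → ℝ) (x : ℤ) :
    Lact N m α φ x = ((N : ℝ) ^ 2 / 2) *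
      ∑ k ∈ Icc 1 m, α k * (φ (jumpFst N m x k) + φ (jumpSnd N m x k) - 2 * φ x) := by
  by_cases hbulk : (m : ℤ) ≤ x ∧ x ≤ (N : ℤ) - m
  · simp only [Lact, jumpFst, jumpSnd, if_pos hbulk]
  by_cases hleft : 0 ≤ x ∧ x ≤ (m : ℤ) - 1
  · simp only [Lact, jumpFst, jumpSnd, if_neg hbulk, if_pos hleft]
    exact congrArg _ (sum_congr rfl fun k _ => by ring)
  · simp only [Lact, jumpFst, jumpSnd, if_neg hbulk, if_neg hleft]
    exact congrArg _ (sum_congr rfl fun k _ => by ring)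

theorem jump_mem (hmN : 2 * m ≤ N) (hx : x ∈ Icc (0 : ℤ) N) {k : ℕ} (hk : k ∈ Icc 1 m) :
    jumpFst N m x k ∈ Icc (0 : ℤ) N ∧ jumpSnd N m x k ∈ Icc (0 : ℤ) N := by
  simp only [mem_Icc] at hx hk ⊢
  unfold jumpFst jumpSnd
  split_ifs <;> omega

theorem jump_one_eq_of_abs_sub_eq_one (hx : x ∈ Icc (0 : ℤ) N) (hy : y ∈ Icc (0 : ℤ) N)
    (hxy : |x - y| = 1) : jumpFst N m x 1 = y ∨ jumpSnd N m x 1 = y := by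
  rw [abs_eq zero_le_one] at hxy
  simp only [mem_Icc] at hx hy
  unfold jumpFst jumpSnd
  split_ifs <;> omega

noncomputable def jumpRate (N m : ℕ) (α : ℕ → ℝ) (x y : ℤ) : ℝ :=
  Lact N m α (fun z => if z = y then 1 else 0) x

theorem Lact_eq_sum_mul_jumpRate (hmN : 2 * m ≤ N) (hx : x ∈ Icc (0 : ℤ) N) (φ : ℤ → ℝ) :
    Lact N m α φ x = ∑ y ∈ Icc (0 : ℤ) N, φ y * jumpRate N m α x y := by
  simp only [jumpRate, Lact_eq_sum_jump, mul_sum, mul_left_comm (φ _)]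
  rw [sum_comm]
  refine sum_congr rfl fun k hk => ?_
  obtain ⟨hfst, hsnd⟩ := jump_mem hmN hx hk
  simp only [mul_add, mul_sub, sum_add_distrib, sum_sub_distrib, mul_ite, mul_one, mul_zero,
    sum_ite_eq, hfst, hsnd, hx, if_true]
  ring

theorem sum_jumpRate_eq_zero (hmN : 2 * m ≤ N) (hx : x ∈ Icc (0 : ℤ) N) :
    ∑ y ∈ Icc (0 : ℤ) N, jumpRate N m α x y = 0 := by
  simpa [Lact_eq_sum_jump, one_add_one_eq_two] using
    (Lact_eq_sum_mul_jumpRate (α := α) hmN hx fun _ => 1).symm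

theorem jumpRate_nonneg (hα : ∀ k ∈ Icc 1 m, 0 ≤ α k) (hxy : x ≠ y) :
    0 ≤ jumpRate N m α x y := by
  rw [jumpRate, Lact_eq_sum_jump]
  refine mul_nonneg (by positivity) (sum_nonneg fun k hk => mul_nonneg (hα k hk) ?_)
  simp only [hxy, if_false]
  split_ifs <;> norm_num

theorem neg_jumpRate_self_le (hα : ∀ k ∈ Icc 1 m, 0 ≤ α k)
    (hαs : ∑ k ∈ Icc 1 m, α k ≤ C₀) (x : ℤ) : -jumpRate N m α x x ≤ (N : ℝ) ^ 2 * C₀ := by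
  have hsum : -(2 * C₀) ≤ ∑ k ∈ Icc 1 m, α k * ((if jumpFst N m x k = x then 1 else 0) +
      (if jumpSnd N m x k = x then 1 else 0) - 2 * (if x = x then 1 else 0)) := by
    calc -(2 * C₀) ≤ ∑ k ∈ Icc 1 m, α k * (-2) := by rw [← sum_mul]; linarith
      _ ≤ _ := sum_le_sum fun k hk => by
          gcongr
          · exact hα k hk
          · split_ifs <;> norm_num
  rw [jumpRate, Lact_eq_sum_jump]
  nlinarith [mul_le_mul_of_nonneg_left hsum (by positivity : (0 : ℝ) ≤ (N : ℝ) ^ 2 / 2)]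

theorem half_mul_le_jumpRate (hm : 1 ≤ m) (hα : ∀ k ∈ Icc 1 m, 0 ≤ α k) (hα1 : c ≤ α 1)
    (hx : x ∈ Icc (0 : ℤ) N) (hy : y ∈ Icc (0 : ℤ) N) (hxy : |x - y| = 1) :
    (N : ℝ) ^ 2 / 2 * c ≤ jumpRate N m α x y := by
  have hne : x ≠ y := fun h => by simp [h] at hxy
  have h1 : (1 : ℕ) ∈ Icc 1 m := mem_Icc.mpr ⟨le_rfl, hm⟩
  rw [jumpRate, Lact_eq_sum_jump]
  gcongr
  refine le_trans ?_ (single_le_sum (fun k hk => mul_nonneg (hα k hk) ?_) h1)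
  · simp only [hne, if_false]
    rcases jump_one_eq_of_abs_sub_eq_one (m := m) hx hy hxy with h | h <;>
      simp only [h, if_true] <;> split_ifs <;> norm_num <;> linarith [hα 1 h1]
  · simp only [hne, if_false]
    split_ifs <;> norm_num

end Generator

noncomputable def stepConst (c C₀ : ℝ) : ℝ := 2 * C₀ / c + 1

theorem one_le_stepConst {c C₀ : ℝ} (hc : 0 < c) (hC₀ : 0 ≤ C₀) : 1 ≤ stepConst c C₀ := by
  have : 0 ≤ 2 * C₀ / c := by positivity
  unfold stepConst; linarith

theorem two_mul_le_mul_stepConst {c C₀ : ℝ} (hc : 0 < c) : 2 * C₀ ≤ c * stepConst c C₀ := by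
  rw [stepConst, mul_add, mul_div_cancel₀ _ hc.ne']
  linarith

section Harnack

variable {N m : ℕ} {α : ℕ → ℝ} {c C₀ : ℝ} {π : ℤ → ℝ}

theorem IsLactInvariant.le_stepConst_mul (hinv : IsLactInvariant N m α π) (hm : 1 ≤ m)
    (hc : 0 < c) (hα : ∀ k ∈ Icc 1 m, 0 ≤ α k) (hα1 : c ≤ α 1)
    (hαs : ∑ k ∈ Icc 1 m, α k ≤ C₀) (hπ : ∀ x ∈ Icc (0 : ℤ) N, 0 ≤ π x) {x y : ℤ}
    (hx : x ∈ Icc (0 : ℤ) N) (hy : y ∈ Icc (0 : ℤ) N) (hxy : |x - y| = 1) :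
    π x ≤ stepConst c C₀ * π y := by
  have hne : x ≠ y := fun h => by simp [h] at hxy
  have hN : (0 : ℝ) < N := by
    simp only [mem_Icc] at hx hy
    rw [abs_eq zero_le_one] at hxy
    exact_mod_cast (show 0 < N by omega)
  have hflux := mul_le_mul_neg_of_sum_mul_eq_zero hπ (fun z _ hz => jumpRate_nonneg hα hz)
    (hinv fun z => if z = y then 1 else 0) hy hx hne
  have hin := mul_le_mul_of_nonneg_left (half_mul_le_jumpRate hm hα hα1 hx hy hxy) (hπ x hx)
  have hout := mul_le_mul_of_nonneg_left (neg_jumpRate_self_le (N := N) hα hαs y) (hπ y hy)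
  have hratio : π x * c ≤ 2 * C₀ * π y := by
    have : (N : ℝ) ^ 2 / 2 * (π x * c) ≤ (N : ℝ) ^ 2 / 2 * (2 * C₀ * π y) := by linarith
    exact le_of_mul_le_mul_left this (by positivity)
  calc π x ≤ 2 * C₀ / c * π y := by rw [div_mul_eq_mul_div, le_div_iff₀ hc]; linarith
    _ ≤ stepConst c C₀ * π y := by unfold stepConst; linarith [hπ y hy]

theorem IsLactInvariant.le_stepConst_pow_mul (hinv : IsLactInvariant N m α π) (hm : 1 ≤ m)
    (hc : 0 < c) (hα : ∀ k ∈ Icc 1 m, 0 ≤ α k) (hα1 : c ≤ α 1)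
    (hαs : ∑ k ∈ Icc 1 m, α k ≤ C₀) (hπ : ∀ x ∈ Icc (0 : ℤ) N, 0 ≤ π x) (d : ℕ) {x y : ℤ}
    (hx : x ∈ Icc (0 : ℤ) N) (hy : y ∈ Icc (0 : ℤ) N) (hxy : |x - y| ≤ d) :
    π x ≤ stepConst c C₀ ^ d * π y :=
  le_pow_mul_of_forall_abs_sub_eq_one (one_le_stepConst hc ((sum_nonneg hα).trans hαs)) hπ
    (fun _ hx _ hy => hinv.le_stepConst_mul hm hc hα hα1 hαs hπ hx hy) d x hx y hy hxy

end Harnack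

def ramp (t z : ℤ) : ℝ := ((max (z - t) 0 : ℤ) : ℝ)

noncomputable def tent (m : ℕ) (α : ℕ → ℝ) (s : ℤ) : ℝ :=
  ∑ k ∈ Icc 1 m, α k * ((max ((k : ℤ) - |s|) 0 : ℤ) : ℝ)

section Ramp

variable {N m : ℕ} {α : ℕ → ℝ} {x t : ℤ}

theorem Lact_ramp_of_bulk (hx : (m : ℤ) ≤ x ∧ x ≤ (N : ℤ) - m) (t : ℤ) :
    Lact N m α (ramp t) x = (N : ℝ) ^ 2 / 2 * tent m α (x - t) := by
  simp only [Lact, if_pos hx, tent]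
  refine congrArg _ (sum_congr rfl fun k _ => congrArg _ ?_)
  have : max (x + k - t) 0 + max (x - k - t) 0 - 2 * max (x - t) 0 = max (k - |x - t|) 0 := by
    rcases abs_cases (x - t) with ⟨h, _⟩ | ⟨h, _⟩ <;> rw [h] <;> omega
  simp only [ramp]
  exact_mod_cast this

theorem Lact_ramp_of_lt (hx₀ : 0 ≤ x) (hx : x < m) (ht : 2 * (m : ℤ) - 1 ≤ t) :
    Lact N m α (ramp t) x = 0 := by
  have hbulk : ¬((m : ℤ) ≤ x ∧ x ≤ (N : ℤ) - m) := by omega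
  have hleft : 0 ≤ x ∧ x ≤ (m : ℤ) - 1 := ⟨hx₀, by omega⟩
  rw [Lact, if_neg hbulk, if_pos hleft]
  refine mul_eq_zero_of_right _ (sum_eq_zero fun k hk => ?_)
  rw [mem_Icc] at hk
  simp only [ramp, max_eq_right (show x + k - t ≤ 0 by omega),
    max_eq_right (show x - t ≤ 0 by omega), max_eq_right (show x - min (k : ℤ) x - t ≤ 0 by omega)]
  simp

theorem Lact_ramp_of_gt (hmN : 2 * m ≤ N) (hx : (N : ℤ) - m < x) (hxN : x ≤ N)
    (ht : t ≤ (N : ℤ) - 2 * m + 1) :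
    Lact N m α (ramp t) x = -((N : ℝ) ^ 2 / 2 * tent m α (x - N)) := by
  have hbulk : ¬((m : ℤ) ≤ x ∧ x ≤ (N : ℤ) - m) := by omega
  have hleft : ¬(0 ≤ x ∧ x ≤ (m : ℤ) - 1) := by omega
  rw [Lact, if_neg hbulk, if_neg hleft, tent, ← mul_neg, ← sum_neg_distrib]
  refine congrArg _ (sum_congr rfl fun k hk => ?_)
  rw [mem_Icc] at hk
  have : max (x - k - t) 0 - max (x - t) 0 + (max (x + min (k : ℤ) (N - x) - t) 0 - max (x - t) 0)
      = -max (k - |x - N|) 0 := by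
    rw [abs_of_nonpos (by omega : x - N ≤ 0)]; omega
  simp only [ramp, ← mul_neg]
  exact congrArg _ (by exact_mod_cast this)

theorem Lact_ramp (hmN : 2 * m ≤ N) (hx : x ∈ Icc (0 : ℤ) N) (ht₁ : 2 * (m : ℤ) - 1 ≤ t)
    (ht₂ : t ≤ (N : ℤ) - 2 * m + 1) :
    Lact N m α (ramp t) x = (N : ℝ) ^ 2 / 2 *
      ((if x ∈ Icc (m : ℤ) (N - m) then tent m α (x - t) else 0) -
        if x ∈ Icc ((N : ℤ) - m + 1) N then tent m α (x - N) else 0) := by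
  rw [mem_Icc] at hx
  by_cases hbulk : (m : ℤ) ≤ x ∧ x ≤ (N : ℤ) - m
  · rw [Lact_ramp_of_bulk hbulk, if_pos (mem_Icc.mpr hbulk), if_neg (by rw [mem_Icc]; omega)]
    ring
  by_cases hleft : x < m
  · rw [Lact_ramp_of_lt hx.1 hleft ht₁, if_neg (by rw [mem_Icc]; omega),
      if_neg (by rw [mem_Icc]; omega)]
    ring
  · rw [Lact_ramp_of_gt hmN (by omega) hx.2 ht₂, if_neg (by rw [mem_Icc]; omega),
      if_pos (by rw [mem_Icc]; omega)]
    ring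

end Ramp

section Tent

variable {m : ℕ} {α : ℕ → ℝ} {c C₀ : ℝ}

theorem tent_nonneg (hα : ∀ k ∈ Icc 1 m, 0 ≤ α k) (s : ℤ) : 0 ≤ tent m α s :=
  sum_nonneg fun k hk => mul_nonneg (hα k hk) (by positivity)

theorem tent_le (hα : ∀ k ∈ Icc 1 m, 0 ≤ α k) (hαs : ∑ k ∈ Icc 1 m, α k ≤ C₀) (s : ℤ) :
    tent m α s ≤ m * C₀ := by
  calc tent m α s ≤ ∑ k ∈ Icc 1 m, α k * m := sum_le_sum fun k hk => by
        gcongr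
        · exact hα k hk
        · have := (mem_Icc.mp hk).2
          exact_mod_cast (show max ((k : ℤ) - |s|) 0 ≤ m by have := abs_nonneg s; omega)
    _ ≤ m * C₀ := by rw [← sum_mul, mul_comm]; gcongr

theorem tent_eq_zero_of_le_abs {s : ℤ} (hs : (m : ℤ) ≤ |s|) : tent m α s = 0 :=
  sum_eq_zero fun k hk => by
    have := (mem_Icc.mp hk).2
    rw [max_eq_right (by omega)]
    simp

theorem le_tent_zero (hm : 1 ≤ m) (hα : ∀ k ∈ Icc 1 m, 0 ≤ α k) (hα1 : c ≤ α 1) :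
    c ≤ tent m α 0 := by
  refine hα1.trans (le_of_eq_of_le ?_ (single_le_sum (fun k hk => mul_nonneg (hα k hk) ?_)
    (mem_Icc.mpr ⟨le_rfl, hm⟩)))
  · simp
  · positivity

theorem sum_tent_sub_le (hα : ∀ k ∈ Icc 1 m, 0 ≤ α k)
    (hαs : ∑ k ∈ Icc 1 m, α k ≤ C₀) (s : Finset ℤ) (t : ℤ) :
    ∑ x ∈ s, tent m α (x - t) ≤ 2 * m ^ 2 * C₀ := by
  set W := Icc (t - m + 1) (t + m - 1)
  have hC₀ : 0 ≤ C₀ := (sum_nonneg hα).trans hαs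
  have hW : (#W : ℝ) ≤ 2 * m := by
    exact_mod_cast (show #W ≤ 2 * m by rw [Int.card_Icc]; omega)
  have hsupp : ∀ x ∈ s, tent m α (x - t) ≠ 0 → x ∈ W := fun x _ hx => by
    by_contra hxW
    refine hx (tent_eq_zero_of_le_abs ?_)
    rw [mem_Icc] at hxW
    rcases abs_cases (x - t) with ⟨h, _⟩ | ⟨h, _⟩ <;> rw [h] <;> omega
  calc ∑ x ∈ s, tent m α (x - t) = ∑ x ∈ s with x ∈ W, tent m α (x - t) :=
        (sum_filter_of_ne hsupp).symm
    _ ≤ ∑ x ∈ W, tent m α (x - t) :=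
        sum_le_sum_of_subset_of_nonneg (fun x hx => (mem_filter.mp hx).2)
          fun x _ _ => tent_nonneg hα _
    _ ≤ #W • (m * C₀) := sum_le_card_nsmul _ _ _ fun x _ => tent_le hα hαs _
    _ ≤ 2 * m ^ 2 * C₀ := by
        rw [nsmul_eq_mul]
        nlinarith [mul_le_mul_of_nonneg_right hW (by positivity : (0 : ℝ) ≤ m * C₀)]

end Tent

noncomputable def boundaryFlux (N m : ℕ) (α : ℕ → ℝ) (π : ℤ → ℝ) : ℝ :=
  ∑ x ∈ Icc ((N : ℤ) - m + 1) N, π x * tent m α (x - N)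

section Flux

variable {N m : ℕ} {α : ℕ → ℝ} {c C₀ : ℝ} {π : ℤ → ℝ} {t : ℤ}

theorem IsLactInvariant.sum_mul_tent_eq_boundaryFlux (hinv : IsLactInvariant N m α π)
    (hm : 1 ≤ m) (hmN : 2 * m ≤ N) (ht₁ : 2 * (m : ℤ) - 1 ≤ t)
    (ht₂ : t ≤ (N : ℤ) - 2 * m + 1) :
    ∑ x ∈ Icc (m : ℤ) (N - m), π x * tent m α (x - t) = boundaryFlux N m α π := by
  have hN : (N : ℝ) ^ 2 / 2 ≠ 0 := by
    have : (0 : ℝ) < N := by exact_mod_cast (show 0 < N by omega)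
    positivity
  have h := hinv (ramp t)
  rw [sum_congr rfl fun x hx => by rw [Lact_ramp hmN hx ht₁ ht₂, mul_left_comm, mul_sub,
    mul_ite, mul_ite, mul_zero]] at h
  rw [← mul_sum, sum_sub_distrib, sum_ite_mem, sum_ite_mem,
    inter_eq_right.mpr (Icc_subset_Icc (by omega) (by omega)),
    inter_eq_right.mpr (Icc_subset_Icc (by omega) le_rfl)] at h
  exact sub_eq_zero.mp ((mul_eq_zero.mp h).resolve_left hN)

theorem IsLactInvariant.mul_le_boundaryFlux (hinv : IsLactInvariant N m α π) (hm : 1 ≤ m)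
    (hmN : 2 * m ≤ N) (hα : ∀ k ∈ Icc 1 m, 0 ≤ α k) (hα1 : c ≤ α 1)
    (hπ : ∀ x ∈ Icc (0 : ℤ) N, 0 ≤ π x) (ht₁ : 2 * (m : ℤ) - 1 ≤ t)
    (ht₂ : t ≤ (N : ℤ) - 2 * m + 1) : c * π t ≤ boundaryFlux N m α π := by
  rw [← hinv.sum_mul_tent_eq_boundaryFlux hm hmN ht₁ ht₂]
  calc c * π t ≤ π t * tent m α (t - t) := by
        rw [sub_self, mul_comm]
        exact mul_le_mul_of_nonneg_left (le_tent_zero hm hα hα1) (hπ t (by rw [mem_Icc]; omega))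
    _ ≤ _ := single_le_sum (f := fun x => π x * tent m α (x - t))
        (fun x hx => mul_nonneg (hπ x (by rw [mem_Icc] at hx ⊢; omega)) (tent_nonneg hα _))
        (by rw [mem_Icc]; omega)

theorem IsLactInvariant.boundaryFlux_le (hinv : IsLactInvariant N m α π) (hm : 1 ≤ m)
    (hmN : 2 * m ≤ N) (hc : 0 < c) (hα : ∀ k ∈ Icc 1 m, 0 ≤ α k)
    (hα1 : c ≤ α 1) (hαs : ∑ k ∈ Icc 1 m, α k ≤ C₀) (hπ : ∀ x ∈ Icc (0 : ℤ) N, 0 ≤ π x)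
    (ht₁ : 2 * (m : ℤ) - 1 ≤ t) (ht₂ : t ≤ (N : ℤ) - 2 * m + 1) :
    boundaryFlux N m α π ≤ 2 * m ^ 2 * C₀ * stepConst c C₀ ^ m * π t := by
  have htI : t ∈ Icc (0 : ℤ) N := by rw [mem_Icc]; omega
  have hκ : 0 ≤ stepConst c C₀ :=
    zero_le_one.trans (one_le_stepConst hc ((sum_nonneg hα).trans hαs))
  rw [← hinv.sum_mul_tent_eq_boundaryFlux hm hmN ht₁ ht₂]
  calc ∑ x ∈ Icc (m : ℤ) (N - m), π x * tent m α (x - t)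
      ≤ ∑ x ∈ Icc (m : ℤ) (N - m), stepConst c C₀ ^ m * π t * tent m α (x - t) := by
        refine sum_le_sum fun x hx => ?_
        by_cases hfar : (m : ℤ) ≤ |x - t|
        · simp [tent_eq_zero_of_le_abs hfar]
        · refine mul_le_mul_of_nonneg_right ?_ (tent_nonneg hα _)
          exact hinv.le_stepConst_pow_mul hm hc hα hα1 hαs hπ m
            (by rw [mem_Icc] at hx ⊢; omega) htI (by omega)
    _ = stepConst c C₀ ^ m * π t * ∑ x ∈ Icc (m : ℤ) (N - m), tent m α (x - t) := by
        rw [mul_sum]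
    _ ≤ stepConst c C₀ ^ m * π t * (2 * m ^ 2 * C₀) := by
        gcongr
        · exact mul_nonneg (pow_nonneg hκ m) (hπ t htI)
        · exact sum_tent_sub_le hα hαs _ t
    _ = 2 * m ^ 2 * C₀ * stepConst c C₀ ^ m * π t := by ring

end Flux

noncomputable def harnackConst (m : ℕ) (c C₀ : ℝ) : ℝ := m ^ 2 * stepConst c C₀ ^ (5 * m + 1)

theorem one_le_harnackConst {m : ℕ} {c C₀ : ℝ} (hm : 1 ≤ m) (hc : 0 < c) (hC₀ : 0 ≤ C₀) :
    1 ≤ harnackConst m c C₀ :=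
  one_le_mul_of_one_le_of_one_le (one_le_pow₀ (by exact_mod_cast hm))
    (one_le_pow₀ (one_le_stepConst hc hC₀))

theorem exists_mem_window_abs_sub_le {N m : ℕ} (hmN : 4 * m ≤ N + 2) {z : ℤ} (hz₀ : 0 ≤ z)
    (hzN : z ≤ N) :
    ∃ t, 2 * (m : ℤ) - 1 ≤ t ∧ t ≤ (N : ℤ) - 2 * m + 1 ∧ |z - t| ≤ ((2 * m : ℕ) : ℤ) :=
  ⟨max (2 * m - 1) (min z (N - 2 * m + 1)), by omega, by omega, by push_cast; rw [abs_le]; omega⟩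

theorem IsLactInvariant.le_harnackConst_mul {N m : ℕ} {α : ℕ → ℝ} {c C₀ : ℝ} {π : ℤ → ℝ}
    (hinv : IsLactInvariant N m α π) (hm : 1 ≤ m) (hmN : 2 * m ≤ N) (hc : 0 < c)
    (hα : ∀ k ∈ Icc 1 m, 0 ≤ α k) (hα1 : c ≤ α 1)
    (hαs : ∑ k ∈ Icc 1 m, α k ≤ C₀) (hπ : ∀ x ∈ Icc (0 : ℤ) N, 0 ≤ π x) {x y : ℤ}
    (hx : x ∈ Icc (0 : ℤ) N) (hy : y ∈ Icc (0 : ℤ) N) : π x ≤ harnackConst m c C₀ * π y := by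
  set κ := stepConst c C₀
  have hC₀ : 0 ≤ C₀ := (sum_nonneg hα).trans hαs
  have hκ : 1 ≤ κ := one_le_stepConst hc hC₀
  have hm' : (1 : ℝ) ≤ m ^ 2 := one_le_pow₀ (by exact_mod_cast hm)
  have hchain := hinv.le_stepConst_pow_mul hm hc hα hα1 hαs hπ
  rw [mem_Icc] at hx hy
  by_cases hsmall : N + 2 < 4 * m
  · calc π x ≤ κ ^ (4 * m) * π y :=
          hchain (4 * m) (mem_Icc.mpr hx) (mem_Icc.mpr hy) (by push_cast; rw [abs_le]; omega)
      _ ≤ harnackConst m c C₀ * π y := by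
          gcongr
          · exact hπ y (mem_Icc.mpr hy)
          exact (pow_le_pow_right₀ hκ (by omega)).trans
            (le_mul_of_one_le_left (by positivity) hm')
  obtain ⟨tx, htx₁, htx₂, htx⟩ := exists_mem_window_abs_sub_le (m := m) (by omega) hx.1 hx.2
  obtain ⟨ty, hty₁, hty₂, hty⟩ := exists_mem_window_abs_sub_le (m := m) (by omega) hy.1 hy.2
  have hxt := hchain (2 * m) (y := tx) (mem_Icc.mpr hx) (by rw [mem_Icc]; omega) htx
  have hyt := hchain (2 * m) (x := ty) (by rw [mem_Icc]; omega) (mem_Icc.mpr hy)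
    (by rwa [abs_sub_comm])
  have hflux := (hinv.mul_le_boundaryFlux hm hmN hα hα1 hπ htx₁ htx₂).trans
    (hinv.boundaryFlux_le hm hmN hc hα hα1 hαs hπ hty₁ hty₂)
  have hκ₀ : 0 ≤ κ := zero_le_one.trans hκ
  have hcκ : 2 * C₀ ≤ c * κ := two_mul_le_mul_stepConst hc
  have hπy := hπ y (mem_Icc.mpr hy)
  refine le_of_mul_le_mul_left ?_ hc
  calc c * π x ≤ c * (κ ^ (2 * m) * π tx) := by gcongr
    _ = κ ^ (2 * m) * (c * π tx) := by ring
    _ ≤ κ ^ (2 * m) * (2 * m ^ 2 * C₀ * κ ^ m * π ty) := by gcongr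
    _ ≤ κ ^ (2 * m) * (2 * m ^ 2 * C₀ * κ ^ m * (κ ^ (2 * m) * π y)) := by gcongr
    _ = m ^ 2 * (2 * C₀) * κ ^ (5 * m) * π y := by ring
    _ ≤ m ^ 2 * (c * κ) * κ ^ (5 * m) * π y := by gcongr
    _ = c * (harnackConst m c C₀ * π y) := by rw [harnackConst]; ring

theorem Finset.inv_le_and_le_of_sum_eq_card {ι : Type*} {s : Finset ι} {f : ι → ℝ} {C : ℝ}
    (hs : s.Nonempty) (hC : 0 < C) (hf : ∀ x ∈ s, ∀ y ∈ s, f x ≤ C * f y)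
    (hsum : ∑ x ∈ s, f x = #s) : ∀ x ∈ s, C⁻¹ ≤ f x ∧ f x ≤ C := by
  have hsum' : ∑ x ∈ s, f x = ∑ _x ∈ s, (1 : ℝ) := by simp [hsum]
  obtain ⟨x₀, hx₀, hfx₀⟩ := exists_le_of_sum_le hs hsum'.ge
  obtain ⟨y₀, hy₀, hfy₀⟩ := exists_le_of_sum_le hs hsum'.le
  intro x hx
  constructor
  · rw [inv_le_iff_one_le_mul₀' hC]
    exact hfx₀.trans (hf x₀ hx₀ x hx)
  · calc f x ≤ C * f y₀ := hf x hx y₀ hy₀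
      _ ≤ C * 1 := by gcongr
      _ = C := mul_one C

theorem exists_isLactInvariant {N m : ℕ} {α : ℕ → ℝ} (hmN : 2 * m ≤ N)
    (hα : ∀ k ∈ Icc 1 m, 0 ≤ α k) :
    ∃ π : ℤ → ℝ, (∀ x ∈ Icc (0 : ℤ) N, 0 ≤ π x) ∧ IsLactInvariant N m α π ∧
      ∑ x ∈ Icc (0 : ℤ) N, π x = N + 1 := by
  obtain ⟨μ, hμ, hmass, hbal⟩ := exists_nonneg_stationary_of_sum_eq_zero
    (nonempty_Icc.mpr (Nat.cast_nonneg N)) (fun x _ y _ hxy => jumpRate_nonneg hα hxy)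
    fun x hx => sum_jumpRate_eq_zero hmN hx
  set a := ((N : ℝ) + 1) / ∑ x ∈ Icc (0 : ℤ) N, μ x
  refine ⟨fun x => a * μ x, fun x hx => mul_nonneg (by positivity) (hμ x hx), fun φ => ?_, ?_⟩
  · simp_rw [mul_assoc, ← mul_sum]
    refine mul_eq_zero_of_right a ?_
    have hexpand : ∀ x ∈ Icc (0 : ℤ) N, μ x * Lact N m α φ x =
        ∑ y ∈ Icc (0 : ℤ) N, φ y * (μ x * jumpRate N m α x y) := fun x hx => by
      rw [Lact_eq_sum_mul_jumpRate hmN hx, mul_sum]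
      exact sum_congr rfl fun _ _ => by ring
    rw [sum_congr rfl hexpand, sum_comm]
    exact sum_eq_zero fun y hy => by rw [← mul_sum, hbal y hy, mul_zero]
  · rw [← mul_sum, div_mul_cancel₀ _ hmass.ne']

/-- There is a constant `C ≥ 1` depending only on `m, c, C₀` such that any nonnegative
invariant function `π` on `I = {0,…,N}` (i.e. `Σ_{x∈I} π_x (ℒφ)_x = 0` for all `φ`)
satisfies `sup_I π ≤ C · inf_I π`; moreover there exists such an invariant `π ≥ 0` with
total mass `N + 1` and `C⁻¹ ≤ π_x ≤ C` on `I`. -/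
theorem invariant_measure_elliptic_estimate
    (m : ℕ) (c C₀ : ℝ) (hm : 1 ≤ m) (hc : 0 < c) (hC₀ : 0 < C₀) :
    ∃ C : ℝ, 1 ≤ C ∧
      ∀ (N : ℕ) (α : ℕ → ℝ), 2 ≤ N → 2 * m ≤ N →
        (∀ k ∈ Finset.Icc 1 m, 0 ≤ α k) → c ≤ α 1 →
        (∑ k ∈ Finset.Icc 1 m, α k) ≤ C₀ →
        (∀ π : ℤ → ℝ,
            (∀ x ∈ Finset.Icc (0 : ℤ) (N : ℤ), 0 ≤ π x) →
            (∀ φ : ℤ → ℝ, ∑ x ∈ Finset.Icc (0 : ℤ) (N : ℤ), π x * Lact N m α φ x = 0) →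
            ∀ x ∈ Finset.Icc (0 : ℤ) (N : ℤ), ∀ y ∈ Finset.Icc (0 : ℤ) (N : ℤ),
              π x ≤ C * π y) ∧
        (∃ π : ℤ → ℝ,
            (∀ x ∈ Finset.Icc (0 : ℤ) (N : ℤ), 0 ≤ π x) ∧
            (∀ φ : ℤ → ℝ, ∑ x ∈ Finset.Icc (0 : ℤ) (N : ℤ), π x * Lact N m α φ x = 0) ∧
            (∑ x ∈ Finset.Icc (0 : ℤ) (N : ℤ), π x) = (N : ℝ) + 1 ∧
            ∀ x ∈ Finset.Icc (0 : ℤ) (N : ℤ), C⁻¹ ≤ π x ∧ π x ≤ C) := by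
  have hC := one_le_harnackConst hm hc hC₀.le
  refine ⟨harnackConst m c C₀, hC, fun N α _ hmN hα hα1 hαs => ?_⟩
  have harnack : ∀ π : ℤ → ℝ, (∀ x ∈ Icc (0 : ℤ) N, 0 ≤ π x) → IsLactInvariant N m α π →
      ∀ x ∈ Icc (0 : ℤ) N, ∀ y ∈ Icc (0 : ℤ) N, π x ≤ harnackConst m c C₀ * π y :=
    fun π hπ hinv x hx y hy => hinv.le_harnackConst_mul hm hmN hc hα hα1 hαs hπ hx hy
  refine ⟨harnack, ?_⟩
  obtain ⟨π, hπ, hinv, hmass⟩ := exists_isLactInvariant hmN hα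
  refine ⟨π, hπ, hinv, hmass, inv_le_and_le_of_sum_eq_card (nonempty_Icc.mpr (Nat.cast_nonneg N))
    (zero_lt_one.trans_le hC) (harnack π hπ hinv) ?_⟩
  rw [hmass, Int.card_Icc, sub_zero, Int.toNat_natCast_add_one]
  push_cast; rfl
end

section
/- Every function π : I → ℝ satisfying Σ_{x∈I} π_x·(ℒφ)_x = 0 for every function φ : I → ℝ attains its extrema over I on the two boundary blocks: sup_{x∈I} π_x = max{ max_{0≤x≤m−1} π_x , max_{N−m+1≤x≤N} π_x } and inf_{x∈I} π_x = min{ min_{0≤x≤m−1} π_x , min_{N−m+1≤x≤N} π_x }. -/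
/-!
A point mass at a bulk site `y` (with `m ≤ y ≤ N - m`) vanishes wherever the boundary clamping
of `ℒ` could matter, so `ℒ` acts on it as `(N²/2) Δ` with `Δ` the long-range Laplacian. As `Δ` is
symmetric, testing invariance against it gives `Δπ y = 0`: `π` is harmonic in the bulk. At a
maximum `y`, `Δπ y` is a nonnegative combination of the nonpositive differences
`π(y ± k) - π y`, and `α 1 > 0` forces `π (y + 1) = π y`; so a bulk maximum walks right until
it reaches the block `{N-m+1, …, N}`. The minimum is the maximum of `-π`.
-/

open scoped BigOperators

lemma Finset.sup'_eq_max_of_forall_le {ι β : Type*} [DecidableEq ι] [LinearOrder β]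
    {s t u : Finset ι} {f : ι → β} (hs : s.Nonempty) (ht : t.Nonempty) (hu : u.Nonempty)
    (hts : t ⊆ s) (hus : u ⊆ s) {z : ι} (hz : z ∈ t ∪ u) (hmax : ∀ x ∈ s, f x ≤ f z) :
    s.sup' hs f = max (t.sup' ht f) (u.sup' hu f) := by
  rw [← Finset.sup'_union ht hu]
  exact le_antisymm (Finset.sup'_le _ _ fun x hx => (hmax x hx).trans (Finset.le_sup' f hz))
    (Finset.sup'_le _ _ fun x hx => Finset.le_sup' f (Finset.union_subset hts hus hx))

lemma Finset.inf'_eq_min_of_forall_ge {ι β : Type*} [DecidableEq ι] [LinearOrder β]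
    {s t u : Finset ι} {f : ι → β} (hs : s.Nonempty) (ht : t.Nonempty) (hu : u.Nonempty)
    (hts : t ⊆ s) (hus : u ⊆ s) {z : ι} (hz : z ∈ t ∪ u) (hmin : ∀ x ∈ s, f z ≤ f x) :
    s.inf' hs f = min (t.inf' ht f) (u.inf' hu f) := by
  rw [← Finset.inf'_union ht hu]
  exact le_antisymm
    (Finset.le_inf' _ _ fun x hx => Finset.inf'_le f (Finset.union_subset hts hus hx))
    (Finset.le_inf' _ _ fun x hx => (Finset.inf'_le f hz).trans (hmin x hx))

def longRangeLaplacian (m : ℕ) (α : ℕ → ℝ) (φ : ℤ → ℝ) (x : ℤ) : ℝ :=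
  ∑ k ∈ Finset.Icc 1 m, α k * (φ (x + k) + φ (x - k) - 2 * φ x)

lemma longRangeLaplacian_neg (m : ℕ) (α : ℕ → ℝ) (φ : ℤ → ℝ) (x : ℤ) :
    longRangeLaplacian m α (-φ) x = -longRangeLaplacian m α φ x := by
  simp only [longRangeLaplacian, Pi.neg_apply, ← Finset.sum_neg_distrib]
  exact Finset.sum_congr rfl fun k _ => by ring

lemma Lact_eq_longRangeLaplacian {N m : ℕ} (α : ℕ → ℝ) {φ : ℤ → ℝ}
    (hφ : ∀ z : ℤ, z < m ∨ (N : ℤ) - m < z → φ z = 0) {x : ℤ} (hx : 0 ≤ x) :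
    Lact N m α φ x = (N : ℝ) ^ 2 / 2 * longRangeLaplacian m α φ x := by
  unfold Lact longRangeLaplacian
  split_ifs with hbulk hleft
  · rfl
  · refine congrArg _ (Finset.sum_congr rfl fun k hk => ?_)
    rw [Finset.mem_Icc] at hk
    rw [hφ x (by omega), hφ (x - k) (by omega), hφ (x - min (k : ℤ) x) (by omega)]
    ring
  · refine congrArg _ (Finset.sum_congr rfl fun k hk => ?_)
    rw [Finset.mem_Icc] at hk
    rw [hφ x (by omega), hφ (x + k) (by omega), hφ (x + min (k : ℤ) (N - x)) (by omega)]
    ring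

lemma sum_mul_ite_add_eq {s : Finset ℤ} (π : ℤ → ℝ) {y j : ℤ} (h : y - j ∈ s) :
    ∑ x ∈ s, π x * (if x + j = y then 1 else 0) = π (y - j) := by
  rw [Finset.sum_eq_single_of_mem (y - j) h fun x _ hx => by rw [if_neg (by omega), mul_zero]]
  simp

lemma sum_mul_longRangeLaplacian_ite_eq (m : ℕ) (α : ℕ → ℝ) (π : ℤ → ℝ) {s : Finset ℤ}
    {y : ℤ} (hy : y ∈ s) (hys : ∀ k ∈ Finset.Icc 1 m, y - k ∈ s ∧ y + k ∈ s) :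
    ∑ x ∈ s, π x * longRangeLaplacian m α (fun z => if z = y then 1 else 0) x =
      longRangeLaplacian m α π y := by
  simp only [longRangeLaplacian, Finset.mul_sum]
  rw [Finset.sum_comm]
  refine Finset.sum_congr rfl fun k hk => ?_
  have hterm : ∀ x : ℤ, π x * (α k * ((if x + k = y then 1 else 0) +
      (if x - k = y then 1 else 0) - 2 * (if x = y then 1 else 0))) =
      α k * (π x * (if x + k = y then 1 else 0) + π x * (if x + -(k : ℤ) = y then 1 else 0)
        - 2 * (π x * (if x + 0 = y then 1 else 0))) := fun x => by
    rw [← sub_eq_add_neg, add_zero]; ring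
  simp only [hterm, ← Finset.mul_sum, Finset.sum_sub_distrib, Finset.sum_add_distrib]
  rw [sum_mul_ite_add_eq π (hys k hk).1, sum_mul_ite_add_eq π (by simpa using (hys k hk).2),
    sum_mul_ite_add_eq π (by simpa using hy), sub_neg_eq_add, sub_zero]
  ring

lemma longRangeLaplacian_eq_zero_of_invariant {N m : ℕ} (hN : N ≠ 0) (α : ℕ → ℝ)
    (π : ℤ → ℝ)
    (hinv : ∀ φ : ℤ → ℝ, ∑ x ∈ Finset.Icc (0 : ℤ) (N : ℤ), π x * Lact N m α φ x = 0)
    {y : ℤ} (hy : y ∈ Finset.Icc (m : ℤ) (N - m)) :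
    longRangeLaplacian m α π y = 0 := by
  rw [Finset.mem_Icc] at hy
  have hLact : ∀ x ∈ Finset.Icc (0 : ℤ) N,
      π x * Lact N m α (fun z => if z = y then 1 else 0) x =
        (N : ℝ) ^ 2 / 2 * (π x * longRangeLaplacian m α (fun z => if z = y then 1 else 0) x) :=
    fun x hx => by
      rw [Lact_eq_longRangeLaplacian α (fun z hz => if_neg (by omega)) (Finset.mem_Icc.1 hx).1]
      ring
  have h := hinv fun z => if z = y then 1 else 0
  rw [Finset.sum_congr rfl hLact, ← Finset.mul_sum,
    sum_mul_longRangeLaplacian_ite_eq m α π (Finset.mem_Icc.2 ⟨by omega, by omega⟩)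
      fun k hk => by simp only [Finset.mem_Icc] at hk ⊢; omega] at h
  exact (mul_eq_zero.1 h).resolve_left (by positivity)

section MaximumPrinciple

variable {m : ℕ} {α : ℕ → ℝ} {ρ : ℤ → ℝ}

/-- At a local maximum, `Δ` is a sum of nonpositive terms, so each vanishes; the one with
`k = 1` has a positive weight. -/
lemma eq_add_one_of_longRangeLaplacian_eq_zero (hm : 1 ≤ m)
    (hα : ∀ k ∈ Finset.Icc 1 m, 0 ≤ α k) (hα1 : 0 < α 1) {y : ℤ}
    (hmax : ∀ z ∈ Finset.Icc (y - m) (y + m), ρ z ≤ ρ y)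
    (hΔ : longRangeLaplacian m α ρ y = 0) : ρ (y + 1) = ρ y := by
  have hterm : ∀ k ∈ Finset.Icc 1 m, α k * (ρ (y + k) + ρ (y - k) - 2 * ρ y) ≤ 0 := by
    intro k hk
    rw [Finset.mem_Icc] at hk
    have h_add := hmax (y + k) (Finset.mem_Icc.2 ⟨by omega, by omega⟩)
    have h_sub := hmax (y - k) (Finset.mem_Icc.2 ⟨by omega, by omega⟩)
    exact mul_nonpos_of_nonneg_of_nonpos (hα k (Finset.mem_Icc.2 hk)) (by linarith)
  have h1 := (Finset.sum_eq_zero_iff_of_nonpos hterm).1 hΔ 1 (Finset.mem_Icc.2 ⟨le_rfl, hm⟩)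
  have h_add := hmax (y + 1) (Finset.mem_Icc.2 ⟨by omega, by omega⟩)
  have h_sub := hmax (y - 1) (Finset.mem_Icc.2 ⟨by omega, by omega⟩)
  push_cast at h1
  linarith [(mul_eq_zero.1 h1).resolve_left hα1.ne']

lemma exists_mem_boundary_forall_le (hm : 1 ≤ m) (hα : ∀ k ∈ Finset.Icc 1 m, 0 ≤ α k)
    (hα1 : 0 < α 1) {a b : ℤ} (hab : a ≤ b)
    (hΔ : ∀ y ∈ Finset.Icc (a + m) (b - m), longRangeLaplacian m α ρ y = 0) :
    ∃ z ∈ Finset.Icc a (a + m - 1) ∪ Finset.Icc (b - m + 1) b,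
      ∀ x ∈ Finset.Icc a b, ρ x ≤ ρ z := by
  obtain ⟨z, hz, hzmax⟩ := (Finset.Icc a b).exists_max_image ρ (Finset.nonempty_Icc.2 hab)
  rw [Finset.mem_Icc] at hz
  by_cases hbulk : a + m ≤ z ∧ z ≤ b - m
  swap
  · exact ⟨z, Finset.mem_union.2 (by simp only [Finset.mem_Icc]; omega), hzmax⟩
  -- the maximum value propagates to the right, one site at a time, until it leaves the bulk
  have hprop : ∀ y, z ≤ y → y ≤ b - m + 1 → ρ y = ρ z := by
    refine Int.leInduction (fun _ => rfl) fun y hzy ih hy => ?_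
    have hyz := ih (by omega)
    have hlocal : ∀ x ∈ Finset.Icc (y - m) (y + m), ρ x ≤ ρ y := fun x hx =>
      hyz ▸ hzmax x (by simp only [Finset.mem_Icc] at hx ⊢; omega)
    rw [eq_add_one_of_longRangeLaplacian_eq_zero hm hα hα1 hlocal
      (hΔ y (Finset.mem_Icc.2 ⟨by omega, by omega⟩)), hyz]
  refine ⟨b - m + 1, Finset.mem_union_right _ (Finset.mem_Icc.2 ⟨le_rfl, by omega⟩), ?_⟩
  rw [hprop _ (by omega) le_rfl]
  exact hzmax

end MaximumPrinciple

/-- Any invariant function `π` for `ℒ` on `I = {0,…,N}` attains its maximum and its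
minimum over `I` on the union of the two boundary blocks `{0,…,m−1}` and
`{N−m+1,…,N}`. -/
theorem invariant_measure_extrema_on_boundary
    (N m : ℕ) (c : ℝ) (hm : 1 ≤ m) (h2m : 2 * m ≤ N)
    (hc : 0 < c)
    (α : ℕ → ℝ) (hα : ∀ k ∈ Finset.Icc 1 m, 0 ≤ α k)
    (hα1 : c ≤ α 1)
    (π : ℤ → ℝ)
    (hinv : ∀ φ : ℤ → ℝ, ∑ x ∈ Finset.Icc (0 : ℤ) (N : ℤ), π x * Lact N m α φ x = 0) :
    (Finset.Icc (0 : ℤ) (N : ℤ)).sup' (Finset.nonempty_Icc.2 (by omega)) π =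
      max ((Finset.Icc (0 : ℤ) ((m : ℤ) - 1)).sup' (Finset.nonempty_Icc.2 (by omega)) π)
        ((Finset.Icc ((N : ℤ) - (m : ℤ) + 1) (N : ℤ)).sup'
          (Finset.nonempty_Icc.2 (by omega)) π) ∧
    (Finset.Icc (0 : ℤ) (N : ℤ)).inf' (Finset.nonempty_Icc.2 (by omega)) π =
      min ((Finset.Icc (0 : ℤ) ((m : ℤ) - 1)).inf' (Finset.nonempty_Icc.2 (by omega)) π)
        ((Finset.Icc ((N : ℤ) - (m : ℤ) + 1) (N : ℤ)).inf'
          (Finset.nonempty_Icc.2 (by omega)) π) := by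
  have hα1_pos : 0 < α 1 := hc.trans_le hα1
  have hΔ : ∀ y ∈ Finset.Icc (0 + m : ℤ) (N - m), longRangeLaplacian m α π y = 0 :=
    fun y hy => longRangeLaplacian_eq_zero_of_invariant (by omega) α π hinv (by simpa using hy)
  have hΔneg : ∀ y ∈ Finset.Icc (0 + m : ℤ) (N - m), longRangeLaplacian m α (-π) y = 0 :=
    fun y hy => by rw [longRangeLaplacian_neg, hΔ y hy, neg_zero]
  have hleft : Finset.Icc (0 : ℤ) (m - 1) ⊆ Finset.Icc 0 N :=
    Finset.Icc_subset_Icc le_rfl (by omega)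
  have hright : Finset.Icc ((N : ℤ) - m + 1) N ⊆ Finset.Icc 0 N :=
    Finset.Icc_subset_Icc (by omega) le_rfl
  obtain ⟨z, hz, hzmax⟩ := exists_mem_boundary_forall_le hm hα hα1_pos (Int.natCast_nonneg N) hΔ
  obtain ⟨w, hw, hwmin⟩ := exists_mem_boundary_forall_le hm hα hα1_pos (Int.natCast_nonneg N) hΔneg
  rw [zero_add] at hz hw
  exact ⟨Finset.sup'_eq_max_of_forall_le _ _ _ hleft hright hz hzmax,
    Finset.inf'_eq_min_of_forall_ge _ _ _ hleft hright hw
      fun x hx => neg_le_neg_iff.1 (hwmin x hx)⟩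
end

section
/- There is a universal constant C (independent of L and f) such that every probability density f on Ω satisfies the logarithmic Sobolev inequality H(f) ≤ C·L²·D(f). -/
/-!
The uniform measure on the hypercube satisfies a log-Sobolev inequality with respect to all
single-site flips, with an `L`-independent constant: the entropy of a product splits as the entropy
of the first-coordinate marginal plus the mean entropy of the fibres; the marginal is handled by the
two-point inequality and reverse Minkowski, the fibres by induction.

The flip at site `i + 1` is the flip at site `i` conjugated by the swap of `i` and `i + 1`, and
`√D` is subadditive under composition with bijections. Hence
`√D(flip i) ≤ √D(flip 0) + 2 ∑ y, √D(swap y)`, Cauchy–Schwarz gives `D(flip i) ≤ 8 L D`, and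
summing over the `L` sites gives the factor `L²`.
-/

open Finset Real Function

section Euclidean

variable {ι : Type*} [Fintype ι]

lemma sqrt_sum_sq_eq_norm_toLp (a : ι → ℝ) :
    √(∑ i, a i ^ 2) = ‖WithLp.toLp 2 a‖ := by
  simp [EuclideanSpace.norm_eq]

lemma sqrt_sum_add_sq_le (a b : ι → ℝ) :
    √(∑ i, (a i + b i) ^ 2) ≤ √(∑ i, a i ^ 2) + √(∑ i, b i ^ 2) := by
  have h := norm_add_le (WithLp.toLp 2 a) (WithLp.toLp 2 b)
  simp only [← WithLp.toLp_add, ← sqrt_sum_sq_eq_norm_toLp, Pi.add_apply] at h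
  exact h

lemma sq_sqrt_sum_sub_sqrt_sum_le {g h : ι → ℝ} (hg : 0 ≤ g) (hh : 0 ≤ h) :
    (√(∑ i, g i) - √(∑ i, h i)) ^ 2 ≤ ∑ i, (√(g i) - √(h i)) ^ 2 := by
  have H := abs_norm_sub_norm_le (WithLp.toLp 2 fun i => √(g i)) (WithLp.toLp 2 fun i => √(h i))
  simp only [← WithLp.toLp_sub, ← sqrt_sum_sq_eq_norm_toLp, Pi.sub_apply, sq_sqrt (hg _),
    sq_sqrt (hh _)] at H
  calc (√(∑ i, g i) - √(∑ i, h i)) ^ 2 = |√(∑ i, g i) - √(∑ i, h i)| ^ 2 := (sq_abs _).symm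
    _ ≤ √(∑ i, (√(g i) - √(h i)) ^ 2) ^ 2 := pow_le_pow_left₀ (abs_nonneg _) H 2
    _ = ∑ i, (√(g i) - √(h i)) ^ 2 := sq_sqrt (sum_nonneg fun i _ => sq_nonneg _)

end Euclidean

/-- `card α` times the entropy of `g` relative to the uniform measure on `α`. -/
noncomputable def entropy {α : Type*} [Fintype α] (g : α → ℝ) : ℝ :=
  ∑ x, g x * log (g x) - (∑ x, g x) * log ((∑ x, g x) / Fintype.card α)

section Entropy

variable {α β : Type*} [Fintype α] [Fintype β]

lemma entropy_comp_equiv (e : α ≃ β) (g : β → ℝ) : entropy (g ∘ e) = entropy g := by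
  simp only [entropy, comp_apply, e.sum_comp g, e.sum_comp fun x => g x * log (g x),
    Fintype.card_congr e]

lemma mul_log_div_eq (x : ℝ) {c : ℝ} (hc : c ≠ 0) : x * log (x / c) = x * log x - x * log c := by
  rcases eq_or_ne x 0 with rfl | hx
  · simp
  · rw [log_div hx hc, mul_sub]

lemma entropy_prod [Nonempty α] [Nonempty β] (g : α × β → ℝ) :
    entropy g = ∑ a, entropy (fun b => g (a, b)) + entropy (fun a => ∑ b, g (a, b)) := by
  have hα : (Fintype.card α : ℝ) ≠ 0 := by positivity
  have hβ : (Fintype.card β : ℝ) ≠ 0 := by positivity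
  simp only [entropy, Fintype.card_prod, Nat.cast_mul, Fintype.sum_prod_type, sum_sub_distrib,
    mul_log_div_eq _ (mul_ne_zero hα hβ), mul_log_div_eq _ hα, mul_log_div_eq _ hβ, log_mul hα hβ,
    ← sum_mul]
  set S := ∑ x, ∑ y, g (x, y)
  set P := ∑ x, (∑ y, g (x, y)) * log (∑ y, g (x, y))
  ring

lemma mul_log_div_le (u : ℝ) {m : ℝ} (hu : 0 ≤ u) (hm : 0 < m) :
    u * log (u / m) ≤ u * (u / m - 1) := by
  rcases hu.eq_or_lt with rfl | hu
  · simp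
  · exact mul_le_mul_of_nonneg_left (log_le_sub_one_of_pos (by positivity)) hu.le

lemma two_point_entropy_le {u v : ℝ} (hu : 0 ≤ u) (hv : 0 ≤ v) :
    u * log u + v * log v - (u + v) * log ((u + v) / 2) ≤ 2 * (√u - √v) ^ 2 := by
  rcases (add_nonneg hu hv).eq_or_lt with hsum | hsum
  · obtain rfl : u = 0 := by linarith
    obtain rfl : v = 0 := by linarith
    simp
  have hm : 0 < (u + v) / 2 := by positivity
  have hu' := mul_log_div_le u hu hm
  have hv' := mul_log_div_le v hv hm
  rw [mul_log_div_eq _ hm.ne'] at hu' hv'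
  have hsq : (u - v) ^ 2 / (u + v) ≤ 2 * (√u - √v) ^ 2 := by
    rw [div_le_iff₀ hsum]
    have hu2 := sq_sqrt hu
    have hv2 := sq_sqrt hv
    have hfactor : u - v = (√u - √v) * (√u + √v) := by linear_combination hv2 - hu2
    have hsum_sq : (√u + √v) ^ 2 ≤ 2 * (u + v) := by nlinarith [sq_nonneg (√u - √v)]
    calc (u - v) ^ 2 = (√u - √v) ^ 2 * (√u + √v) ^ 2 := by rw [hfactor]; ring
      _ ≤ (√u - √v) ^ 2 * (2 * (u + v)) := by gcongr
      _ = 2 * (√u - √v) ^ 2 * (u + v) := by ring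
  have hsplit :
      u * (u / ((u + v) / 2) - 1) + v * (v / ((u + v) / 2) - 1) = (u - v) ^ 2 / (u + v) := by
    field_simp
    ring
  linarith

lemma entropy_bool_le {G : Bool → ℝ} (hG : 0 ≤ G) :
    entropy G ≤ ∑ b, (√(G (!b)) - √(G b)) ^ 2 := by
  have := two_point_entropy_le (hG true) (hG false)
  simp only [entropy, Fintype.sum_bool, Fintype.card_bool, Bool.not_true, Bool.not_false]
  push_cast
  nlinarith [sq_nonneg (√(G true) - √(G false))]

end Entropy

noncomputable def dirichletEnergy {α : Type*} [Fintype α] (f : α → ℝ) (T : α → α) : ℝ :=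
  ∑ x, (√(f (T x)) - √(f x)) ^ 2

section DirichletEnergy

variable {α : Type*} [Fintype α] (f : α → ℝ)

lemma dirichletEnergy_nonneg (T : α → α) : 0 ≤ dirichletEnergy f T :=
  sum_nonneg fun _ _ => sq_nonneg _

lemma sqrt_dirichletEnergy_comp_le (T : α → α) {S : α → α} (hS : Bijective S) :
    √(dirichletEnergy f (T ∘ S)) ≤ √(dirichletEnergy f T) + √(dirichletEnergy f S) := by
  have hT : ∑ x, (√(f (T (S x))) - √(f (S x))) ^ 2 = dirichletEnergy f T :=
    hS.sum_comp fun y => (√(f (T y)) - √(f y)) ^ 2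
  rw [← hT]
  unfold dirichletEnergy
  simpa only [comp_apply, sub_add_sub_cancel] using
    sqrt_sum_add_sq_le (fun x => √(f (T (S x))) - √(f (S x))) fun x => √(f (S x)) - √(f x)

lemma sqrt_dirichletEnergy_conj_le {s T : α → α} (hs : Bijective s) (hT : Bijective T) :
    √(dirichletEnergy f (s ∘ T ∘ s)) ≤ √(dirichletEnergy f T) + 2 * √(dirichletEnergy f s) := by
  have h₁ := sqrt_dirichletEnergy_comp_le f s (hT.comp hs)
  have h₂ := sqrt_dirichletEnergy_comp_le f T hs
  linarith

end DirichletEnergy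

def flipAt {ι : Type*} [DecidableEq ι] (i : ι) (η : ι → Bool) : ι → Bool :=
  update η i (!η i)

section Hypercube

variable {n : ℕ}

lemma sum_fin_succ_pi {β M : Type*} [Fintype β] [AddCommMonoid M] (F : (Fin (n + 1) → β) → M) :
    ∑ η, F η = ∑ b, ∑ x, F (Fin.cons b x) := by
  rw [← (Fin.consEquiv fun _ => β).sum_comp, Fintype.sum_prod_type]
  rfl

lemma dirichletEnergy_flipAt_zero (g : (Fin (n + 1) → Bool) → ℝ) :
    dirichletEnergy g (flipAt 0) =
      ∑ b, ∑ x, (√(g (Fin.cons (!b) x)) - √(g (Fin.cons b x))) ^ 2 := by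
  simp [dirichletEnergy, flipAt, sum_fin_succ_pi (n := n), Fin.update_cons_zero]

lemma dirichletEnergy_flipAt_succ (g : (Fin (n + 1) → Bool) → ℝ) (i : Fin n) :
    dirichletEnergy g (flipAt i.succ) =
      ∑ b, dirichletEnergy (fun x => g (Fin.cons b x)) (flipAt i) := by
  simp [dirichletEnergy, flipAt, sum_fin_succ_pi (n := n), Fin.cons_update]

theorem entropy_le_sum_dirichletEnergy_flipAt :
    ∀ {n : ℕ} (g : (Fin n → Bool) → ℝ), 0 ≤ g → entropy g ≤ ∑ i, dirichletEnergy g (flipAt i)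
  | 0, g, _ => by simp [entropy]
  | n + 1, g, hg => by
    set G : Bool → ℝ := fun b => ∑ x, g (Fin.cons b x)
    have hchain : entropy g = ∑ b, entropy (fun x => g (Fin.cons b x)) + entropy G := by
      rw [← entropy_comp_equiv (Fin.consEquiv fun _ => Bool), entropy_prod]
      rfl
    have hmarginal : entropy G ≤ dirichletEnergy g (flipAt 0) := by
      rw [dirichletEnergy_flipAt_zero]
      refine (entropy_bool_le fun b => sum_nonneg fun x _ => hg _).trans
        (sum_le_sum fun b _ => sq_sqrt_sum_sub_sqrt_sum_le (fun x => hg _) fun x => hg _)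
    have hfibres : ∑ b, entropy (fun x => g (Fin.cons b x)) ≤
        ∑ i : Fin n, dirichletEnergy g (flipAt i.succ) := by
      simp only [dirichletEnergy_flipAt_succ]
      rw [sum_comm]
      exact sum_le_sum fun b _ => entropy_le_sum_dirichletEnergy_flipAt _ fun x => hg _
    rw [Fin.sum_univ_succ]
    linarith

end Hypercube

section Sites

variable {L : ℕ}

lemma flipAt_involutive {ι : Type*} [DecidableEq ι] (i : ι) : Involutive (flipAt i) := by
  intro η
  simp [flipAt]

lemma flipAt_comp_perm {ι : Type*} [DecidableEq ι] (σ : Equiv.Perm ι) (i : ι) (η : ι → Bool) :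
    flipAt i η ∘ σ = flipAt (σ.symm i) (η ∘ σ) := by
  simp [flipAt, update_comp_equiv]

/-- Exchange of the spins at sites `y` and `y + 1`; the identity when `y + 1` is not a site. -/
def adjSwap (L y : ℕ) (η : Fin L → Bool) : Fin L → Bool :=
  if h : y + 1 < L then η ∘ Equiv.swap ⟨y, by omega⟩ ⟨y + 1, h⟩ else η

lemma adjSwap_involutive (y : ℕ) : Involutive (adjSwap L y) := by
  intro η
  unfold adjSwap
  split_ifs <;> ext <;> simp

lemma flipAt_succ_eq_adjSwap_conj {y : ℕ} (hy : y + 1 < L) :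
    flipAt ⟨y + 1, hy⟩ = adjSwap L y ∘ flipAt ⟨y, by omega⟩ ∘ adjSwap L y := by
  ext η : 1
  simp [adjSwap, hy, flipAt_comp_perm, comp_assoc, ← Equiv.Perm.coe_mul]

lemma sqrt_dirichletEnergy_flipAt_le (f : (Fin L → Bool) → ℝ) (hL : 0 < L) :
    ∀ i (hi : i < L), √(dirichletEnergy f (flipAt ⟨i, hi⟩)) ≤
      √(dirichletEnergy f (flipAt ⟨0, hL⟩)) +
        2 * ∑ y ∈ range i, √(dirichletEnergy f (adjSwap L y))
  | 0, _ => by simp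
  | i + 1, hi => by
    rw [flipAt_succ_eq_adjSwap_conj hi, sum_range_succ]
    have hconj := sqrt_dirichletEnergy_conj_le f (adjSwap_involutive i).bijective
      (flipAt_involutive (⟨i, by omega⟩ : Fin L)).bijective
    have := sqrt_dirichletEnergy_flipAt_le f hL i (by omega)
    linarith

lemma dirichletEnergy_flipAt_le (f : (Fin L → Bool) → ℝ) (hL : 0 < L) (i : Fin L) :
    dirichletEnergy f (flipAt i) ≤ 8 * L *
      (∑ y ∈ range (L - 1), dirichletEnergy f (adjSwap L y) +
        dirichletEnergy f (flipAt ⟨0, hL⟩)) := by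
  set a := √(dirichletEnergy f (flipAt ⟨0, hL⟩))
  set B := ∑ y ∈ range (L - 1), √(dirichletEnergy f (adjSwap L y))
  have hpath : √(dirichletEnergy f (flipAt i)) ≤ a + 2 * B := by
    have hpartial : ∑ y ∈ range i, √(dirichletEnergy f (adjSwap L y)) ≤ B :=
      sum_le_sum_of_subset_of_nonneg (range_subset_range.2 (by omega)) fun _ _ _ => sqrt_nonneg _
    have := sqrt_dirichletEnergy_flipAt_le f hL i i.isLt
    linarith
  have hB : B ^ 2 ≤ L * ∑ y ∈ range (L - 1), dirichletEnergy f (adjSwap L y) := by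
    calc B ^ 2 ≤ (L - 1 : ℕ) * ∑ y ∈ range (L - 1), √(dirichletEnergy f (adjSwap L y)) ^ 2 := by
          simpa using sq_sum_le_card_mul_sum_sq (s := range (L - 1))
      _ ≤ L * ∑ y ∈ range (L - 1), dirichletEnergy f (adjSwap L y) := by
          simp only [sq_sqrt (dirichletEnergy_nonneg f _)]
          gcongr
          · exact sum_nonneg fun _ _ => dirichletEnergy_nonneg f _
          · omega
  have ha : a ^ 2 = dirichletEnergy f (flipAt ⟨0, hL⟩) := sq_sqrt (dirichletEnergy_nonneg f _)
  have hL1 : (1 : ℝ) ≤ L := by exact_mod_cast hL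
  calc dirichletEnergy f (flipAt i) = √(dirichletEnergy f (flipAt i)) ^ 2 :=
        (sq_sqrt (dirichletEnergy_nonneg f _)).symm
    _ ≤ (a + 2 * B) ^ 2 := pow_le_pow_left₀ (sqrt_nonneg _) hpath 2
    _ ≤ 2 * a ^ 2 + 8 * B ^ 2 := by nlinarith [sq_nonneg (a - 2 * B)]
    _ ≤ _ := by nlinarith [dirichletEnergy_nonneg f (flipAt ⟨0, hL⟩)]

end Sites

/-- Logarithmic Sobolev inequality for the Kawasaki (nearest-neighbor swap) dynamic
together with a single Glauber flip at site `1`, on the hypercube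
`Ω = {−1,1}^{{1,…,L}}` (encoded as `Fin L → Bool`) with the uniform measure: there is
a universal constant `C` with `H(f) ≤ C·L²·D(f)` for every probability density `f`. -/
theorem kawasaki_boundary_glauber_log_sobolev :
    ∃ C : ℝ, 0 < C ∧
      ∀ (L : ℕ) (hL : 1 ≤ L) (f : (Fin L → Bool) → ℝ),
        (∀ η, 0 ≤ f η) →
        ((2 : ℝ) ^ L)⁻¹ * (∑ η : Fin L → Bool, f η) = 1 →
        ((2 : ℝ) ^ L)⁻¹ * (∑ η : Fin L → Bool, f η * Real.log (f η)) ≤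
          C * (L : ℝ) ^ 2 *
            ((∑ y : Fin (L - 1),
                ((2 : ℝ) ^ L)⁻¹ *
                  ∑ η : Fin L → Bool,
                    (Real.sqrt
                        (f (η ∘ Equiv.swap
                          ⟨(y : ℕ), by have := y.isLt; omega⟩
                          ⟨(y : ℕ) + 1, by have := y.isLt; omega⟩)) -
                      Real.sqrt (f η)) ^ 2) +
              ((2 : ℝ) ^ L)⁻¹ *
                ∑ η : Fin L → Bool,
                  (Real.sqrt (f (Function.update η ⟨0, hL⟩ (!η ⟨0, hL⟩))) -
                    Real.sqrt (f η)) ^ 2) := by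
  refine ⟨8, by norm_num, fun L hL f hf hmean => ?_⟩
  have hent : ∑ η, f η * log (f η) = entropy f := by
    simp [entropy, div_eq_inv_mul, hmean]
  have hswap : ∀ y : Fin (L - 1), dirichletEnergy f (adjSwap L y) = ∑ η : Fin L → Bool,
      (√(f (η ∘ Equiv.swap ⟨y, by omega⟩ ⟨y + 1, by omega⟩)) - √(f η)) ^ 2 := fun y => by
    simp only [dirichletEnergy, adjSwap, dif_pos (show (y : ℕ) + 1 < L by omega)]
  set D := ∑ y ∈ range (L - 1), dirichletEnergy f (adjSwap L y) +
    dirichletEnergy f (flipAt ⟨0, hL⟩)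
  have hD : D = ∑ y : Fin (L - 1), ∑ η : Fin L → Bool,
      (√(f (η ∘ Equiv.swap ⟨y, by omega⟩ ⟨y + 1, by omega⟩)) - √(f η)) ^ 2 +
      ∑ η : Fin L → Bool, (√(f (update η ⟨0, hL⟩ (!η ⟨0, hL⟩))) - √(f η)) ^ 2 := by
    simp only [D, sum_range, hswap]
    rfl
  have hlsi : entropy f ≤ L * (8 * L * D) :=
    calc entropy f ≤ ∑ i, dirichletEnergy f (flipAt i) :=
          entropy_le_sum_dirichletEnergy_flipAt f hf
      _ ≤ ∑ _i : Fin L, 8 * L * D := sum_le_sum fun i _ => dirichletEnergy_flipAt_le f hL i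
      _ = L * (8 * L * D) := by simp
  calc ((2 : ℝ) ^ L)⁻¹ * ∑ η, f η * log (f η) ≤ ((2 : ℝ) ^ L)⁻¹ * (L * (8 * L * D)) := by
        rw [hent]; gcongr
    _ = _ := by
        rw [hD, ← mul_sum]
        ring
end

section
/- For all reals c₁ < 1 and c₂ > 1 there exists a constant C depending only on c₁ and c₂ such that for all reals S < T and every ε with 0 < ε < T − S: ∫_{S+ε}^{T} (T−R)^{−c₁}·(R−S)^{−c₂} dR ≤ C·(T−S−ε)^{−c₁}·ε^{1−c₂}. In particular, if T − S ≥ 2ε then ∫_{S+ε}^{T} (T−R)^{−c₁}·(R−S)^{−c₂} dR ≤ C'·(T−S)^{−c₁}·ε^{1−c₂} for a constant C' depending only on c₁ and c₂. -/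
/-!
Substitute `x = R - S`, `τ = T - S` and split `[ε, τ]` at its midpoint `M`. On `[ε, M]` the
factor `(τ - x)^{-c₁}` is within a factor `2^{|c₁|}` of `(τ - ε)^{-c₁}`, while
`∫_ε^∞ x^{-c₂} dx = ε^{1-c₂}/(c₂-1)`. On `[M, τ]` bound `x^{-c₂} ≤ M^{-c₂}` and integrate the
singularity exactly: `∫_M^τ (τ - x)^{-c₁} dx = ((τ - ε)/2)^{1-c₁}/(1-c₁)`. Since both
`(τ - ε)/2` and `ε` are at most `M`, this product is again `≲ (τ - ε)^{-c₁} ε^{1-c₂}`.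
-/

open MeasureTheory intervalIntegral Real Set

lemma rpow_le_two_rpow_abs_mul_rpow {a x : ℝ} (c : ℝ) (ha : 0 < a) (hax : a / 2 ≤ x)
    (hxa : x ≤ a) : x ^ c ≤ 2 ^ |c| * a ^ c := by
  have hx : 0 < x := by linarith
  rcases le_total 0 c with hc | hc
  · calc x ^ c ≤ a ^ c := rpow_le_rpow hx.le hxa hc
      _ ≤ 2 ^ |c| * a ^ c :=
        le_mul_of_one_le_left (by positivity) (one_le_rpow one_le_two (abs_nonneg c))
  · calc x ^ c ≤ (a / 2) ^ c := rpow_le_rpow_of_nonpos (half_pos ha) hax hc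
      _ = 2 ^ |c| * a ^ c := by
        rw [abs_of_nonpos hc, div_rpow ha.le zero_le_two, rpow_neg zero_le_two]
        ring

lemma integral_rpow_le_of_one_lt {c ε b : ℝ} (hc : 1 < c) (hε : 0 < ε) (hεb : ε ≤ b) :
    ∫ x in ε..b, x ^ (-c) ≤ ε ^ (1 - c) / (c - 1) := by
  rw [integral_rpow (Or.inr ⟨by linarith, notMem_uIcc_of_lt hε (by linarith)⟩),
    show -c + 1 = 1 - c by ring, ← neg_div_neg_eq, neg_sub, neg_sub]
  exact div_le_div_of_nonneg_right (sub_le_self _ (rpow_nonneg (hε.trans_le hεb).le _))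
    (by linarith)

lemma integral_sub_rpow {c a τ : ℝ} (hc : c < 1) :
    ∫ x in a..τ, (τ - x) ^ (-c) = (τ - a) ^ (1 - c) / (1 - c) := by
  rw [integral_comp_sub_left (fun x => x ^ (-c)), sub_self, integral_rpow (Or.inl (by linarith)),
    zero_rpow (by intro h; linarith)]
  ring_nf

lemma intervalIntegrable_sub_rpow {r τ a b : ℝ} (hr : -1 < r) :
    IntervalIntegrable (fun x => (τ - x) ^ r) volume a b := by
  simpa only [sub_sub_cancel] using
    (intervalIntegrable_rpow' (a := τ - a) (b := τ - b) hr).comp_sub_left τ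

lemma intervalIntegrable_sub_rpow_mul_rpow {c₁ c₂ τ a b : ℝ} (hc₁ : c₁ < 1) (ha : 0 < a)
    (hab : a ≤ b) :
    IntervalIntegrable (fun x => (τ - x) ^ (-c₁) * x ^ (-c₂)) volume a b := by
  refine (intervalIntegrable_sub_rpow (by linarith)).mul_continuousOn
    (continuousOn_id.rpow_const fun x hx => ?_)
  exact Or.inl (by linarith [(uIcc_of_le hab ▸ hx).1] : x ≠ 0)

section SingularKernel

variable {c₁ c₂ ε τ : ℝ}

lemma integral_sub_rpow_mul_rpow_le_left_half (hc₁ : c₁ < 1) (hc₂ : 1 < c₂) (hε : 0 < ε)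
    (hετ : ε < τ) :
    ∫ x in ε..(ε + τ) / 2, (τ - x) ^ (-c₁) * x ^ (-c₂) ≤
      2 ^ |c₁| * (τ - ε) ^ (-c₁) * (ε ^ (1 - c₂) / (c₂ - 1)) := by
  have hM : ε ≤ (ε + τ) / 2 := by linarith
  calc ∫ x in ε..(ε + τ) / 2, (τ - x) ^ (-c₁) * x ^ (-c₂)
      ≤ ∫ x in ε..(ε + τ) / 2, 2 ^ |c₁| * (τ - ε) ^ (-c₁) * x ^ (-c₂) := by
        have hpow := intervalIntegrable_rpow (μ := volume) (r := -c₂)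
          (Or.inr (notMem_uIcc_of_lt hε (hε.trans_le hM)))
        refine integral_mono_on hM (intervalIntegrable_sub_rpow_mul_rpow hc₁ hε hM)
          (hpow.const_mul _) fun x hx => ?_
        have hx₀ : 0 < x := hε.trans_le hx.1
        gcongr
        simpa using rpow_le_two_rpow_abs_mul_rpow (-c₁) (sub_pos.2 hετ)
          (by linarith [hx.2]) (by linarith [hx.1])
    _ = 2 ^ |c₁| * (τ - ε) ^ (-c₁) * ∫ x in ε..(ε + τ) / 2, x ^ (-c₂) :=
        integral_const_mul _ _
    _ ≤ 2 ^ |c₁| * (τ - ε) ^ (-c₁) * (ε ^ (1 - c₂) / (c₂ - 1)) := by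
        gcongr
        exact integral_rpow_le_of_one_lt hc₂ hε hM

lemma integral_sub_rpow_mul_rpow_le_right_half (hc₁ : c₁ < 1) (hc₂ : 1 < c₂) (hε : 0 < ε)
    (hετ : ε < τ) :
    ∫ x in (ε + τ) / 2..τ, (τ - x) ^ (-c₁) * x ^ (-c₂) ≤
      2 ^ |c₁| * (τ - ε) ^ (-c₁) * (ε ^ (1 - c₂) / (1 - c₁)) := by
  set M := (ε + τ) / 2 with hM_def
  have hM : 0 < M := by linarith
  have hMτ : M ≤ τ := by linarith
  have hd : 0 < (τ - ε) / 2 := by linarith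
  have hM_le : M ^ (-c₂) * ((τ - ε) / 2) ≤ ε ^ (1 - c₂) := calc
    M ^ (-c₂) * ((τ - ε) / 2) ≤ M ^ (-c₂) * M := by gcongr; linarith
    _ = M ^ (1 - c₂) := by rw [← rpow_add_one hM.ne']; ring_nf
    _ ≤ ε ^ (1 - c₂) := rpow_le_rpow_of_nonpos hε (by linarith) (by linarith)
  calc ∫ x in M..τ, (τ - x) ^ (-c₁) * x ^ (-c₂)
      ≤ ∫ x in M..τ, (τ - x) ^ (-c₁) * M ^ (-c₂) := by
        refine integral_mono_on hMτ (intervalIntegrable_sub_rpow_mul_rpow hc₁ hM hMτ)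
          ((intervalIntegrable_sub_rpow (by linarith)).mul_const _) fun x hx => ?_
        exact mul_le_mul_of_nonneg_left (rpow_le_rpow_of_nonpos hM hx.1 (by linarith))
          (rpow_nonneg (by linarith [hx.2]) _)
    _ = ((τ - ε) / 2) ^ (1 - c₁) / (1 - c₁) * M ^ (-c₂) := by
        rw [intervalIntegral.integral_mul_const, integral_sub_rpow hc₁,
          show τ - M = (τ - ε) / 2 by linarith]
    _ = M ^ (-c₂) * ((τ - ε) / 2) * ((τ - ε) / 2) ^ (-c₁) / (1 - c₁) := by
        rw [show 1 - c₁ = 1 + -c₁ by ring, rpow_add hd, rpow_one]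
        ring
    _ ≤ ε ^ (1 - c₂) * (2 ^ |c₁| * (τ - ε) ^ (-c₁)) / (1 - c₁) := by
        gcongr ?_ / _
        refine mul_le_mul hM_le ?_ (by positivity) (by positivity)
        simpa using rpow_le_two_rpow_abs_mul_rpow (-c₁) (sub_pos.2 hετ) le_rfl (by linarith)
    _ = 2 ^ |c₁| * (τ - ε) ^ (-c₁) * (ε ^ (1 - c₂) / (1 - c₁)) := by ring

theorem integral_sub_rpow_mul_rpow_le (hc₁ : c₁ < 1) (hc₂ : 1 < c₂)
    (hε : 0 < ε) (hετ : ε < τ) :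
    ∫ x in ε..τ, (τ - x) ^ (-c₁) * x ^ (-c₂) ≤
      2 ^ |c₁| * (1 / (c₂ - 1) + 1 / (1 - c₁)) * (τ - ε) ^ (-c₁) * ε ^ (1 - c₂) := by
  have hM : ε ≤ (ε + τ) / 2 := by linarith
  rw [← integral_add_adjacent_intervals (intervalIntegrable_sub_rpow_mul_rpow hc₁ hε hM)
    (intervalIntegrable_sub_rpow_mul_rpow hc₁ (hε.trans_le hM) (by linarith))]
  calc _ ≤ 2 ^ |c₁| * (τ - ε) ^ (-c₁) * (ε ^ (1 - c₂) / (c₂ - 1)) +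
        2 ^ |c₁| * (τ - ε) ^ (-c₁) * (ε ^ (1 - c₂) / (1 - c₁)) :=
      add_le_add (integral_sub_rpow_mul_rpow_le_left_half hc₁ hc₂ hε hετ)
        (integral_sub_rpow_mul_rpow_le_right_half hc₁ hc₂ hε hετ)
    _ = _ := by ring

end SingularKernel

/-- For exponents `c₁ < 1` and `c₂ > 1` there are constants `C, C'` depending only on
`c₁, c₂` such that for `S < T` and `0 < ε < T − S`:
`∫_{S+ε}^T (T−R)^{−c₁}(R−S)^{−c₂} dR ≤ C·(T−S−ε)^{−c₁}·ε^{1−c₂}`, and if moreover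
`T − S ≥ 2ε` then the integral is at most `C'·(T−S)^{−c₁}·ε^{1−c₂}`. -/
theorem singular_time_integral_cutoff_estimate
    (c₁ c₂ : ℝ) (hc₁ : c₁ < 1) (hc₂ : 1 < c₂) :
    (∃ C : ℝ, 0 < C ∧
      ∀ S T ε : ℝ, S < T → 0 < ε → ε < T - S →
        (∫ R in (S + ε)..T, (T - R) ^ (-c₁) * (R - S) ^ (-c₂)) ≤
          C * (T - S - ε) ^ (-c₁) * ε ^ (1 - c₂)) ∧
    (∃ C' : ℝ, 0 < C' ∧
      ∀ S T ε : ℝ, S < T → 0 < ε → ε < T - S → 2 * ε ≤ T - S →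
        (∫ R in (S + ε)..T, (T - R) ^ (-c₁) * (R - S) ^ (-c₂)) ≤
          C' * (T - S) ^ (-c₁) * ε ^ (1 - c₂)) := by
  set C := 2 ^ |c₁| * (1 / (c₂ - 1) + 1 / (1 - c₁))
  have hC : 0 < C := by
    have := one_div_pos.2 (sub_pos.2 hc₂)
    have := one_div_pos.2 (sub_pos.2 hc₁)
    positivity
  have key : ∀ S T ε : ℝ, 0 < ε → ε < T - S →
      (∫ R in (S + ε)..T, (T - R) ^ (-c₁) * (R - S) ^ (-c₂)) ≤
        C * (T - S - ε) ^ (-c₁) * ε ^ (1 - c₂) := fun S T ε hε hεT => by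
    have hshift := integral_comp_sub_right (a := S + ε) (b := T)
      (fun x => (T - S - x) ^ (-c₁) * x ^ (-c₂)) S
    simp only [add_sub_cancel_left, sub_sub_sub_cancel_right] at hshift
    rw [hshift]
    exact integral_sub_rpow_mul_rpow_le hc₁ hc₂ hε hεT
  refine ⟨⟨C, hC, fun S T ε _ hε hεT => key S T ε hε hεT⟩,
    ⟨2 ^ |c₁| * C, by positivity, fun S T ε _ hε hεT h2ε => ?_⟩⟩
  calc _ ≤ C * (T - S - ε) ^ (-c₁) * ε ^ (1 - c₂) := key S T ε hε hεT
    _ ≤ C * (2 ^ |c₁| * (T - S) ^ (-c₁)) * ε ^ (1 - c₂) := by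
      gcongr
      simpa using rpow_le_two_rpow_abs_mul_rpow (-c₁) (by linarith : 0 < T - S)
        (by linarith) (by linarith)
    _ = 2 ^ |c₁| * C * (T - S) ^ (-c₁) * ε ^ (1 - c₂) := by ring
end
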